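/- Let f_1 : R^D -> R be convex and differentiable, f_2 : R^D -> R arbitrary, f = f_1 + f_2, and f_hat(y, z) = f_1(z) + <grad f_1(z), y - z> + f_2(y). Suppose a sequence (y^(k)) satisfies y^(k) in argmax_y f_hat(y, y^(k-1)) for every k. Then f(y^(k)) >= f(y^(k-1)) for all k; and if moreover f is bounded above (for instance f <= 0, as for a log-likelihood), then the sequence of values (f(y^(k))) converges. -/

import Mathlib

/-!
Convexity of `f₁` means its linearization at `y k` lies below it, so the surrogate
`f̂(·, y k)` is a minorant of `f` that touches it at `y k`. Hence
`f (y k) = f̂(y k, y k) ≤ f̂(y (k+1), y k) ≤ f (y (k+1))`, and a nondecreasing sequence of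
reals that is bounded above converges to its supremum.
-/

open Set
open scoped RealInnerProductSpace

section FirstOrderCondition

variable {E : Type*} [NormedAddCommGroup E] [NormedSpace ℝ E] {f : E → ℝ} {s : Set E}
  {x v : E}

theorem ConvexOn.apply_sub_le_of_hasFDerivAt {f' : E →L[ℝ] ℝ} (hf : ConvexOn ℝ s f)
    (hx : x ∈ s) (hv : v ∈ s) (hf' : HasFDerivAt f f' x) :
    f' (v - x) ≤ f v - f x := by
  -- restrict `f` to the line `t ↦ x + t • (v - x)` and compare derivative and slope on `[0, 1]`
  let ℓ : ℝ →ᵃ[ℝ] E := AffineMap.lineMap x v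
  have hderiv : HasDerivAt (f ∘ ℓ) (f' (v - x)) 0 := by
    have hf'ℓ : HasFDerivAt f f' (ℓ 0) := by simpa [ℓ] using hf'
    exact hf'ℓ.comp_hasDerivAt 0 AffineMap.hasDerivAt_lineMap
  have hslope : slope (f ∘ ℓ) 0 1 = f v - f x := by
    simp [slope, ℓ]
  exact hslope ▸ (hf.comp_affineMap ℓ).le_slope_of_hasDerivAt
    (by simpa [ℓ] using hx) (by simpa [ℓ] using hv) one_pos hderiv

end FirstOrderCondition

section Gradient

variable {E : Type*} [NormedAddCommGroup E] [InnerProductSpace ℝ E] [CompleteSpace E]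
  {f : E → ℝ} {s : Set E} {x v g : E}

theorem ConvexOn.inner_sub_le_of_hasGradientAt (hf : ConvexOn ℝ s f) (hx : x ∈ s)
    (hv : v ∈ s) (hg : HasGradientAt f g x) :
    ⟪g, v - x⟫ ≤ f v - f x := by
  simpa using hf.apply_sub_le_of_hasFDerivAt hx hv hg.hasFDerivAt

theorem ConvexOn.add_le_add_of_isMax_linearization {f₁ f₂ : E → ℝ}
    (hf₁ : ConvexOn ℝ univ f₁) {x x' : E} (hg : HasGradientAt f₁ g x)
    (hmax : ∀ z, f₁ x + ⟪g, z - x⟫ + f₂ z ≤ f₁ x + ⟪g, x' - x⟫ + f₂ x') :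
    f₁ x + f₂ x ≤ f₁ x' + f₂ x' := by
  have hsurrogate_le : f₁ x + f₂ x ≤ f₁ x + ⟪g, x' - x⟫ + f₂ x' := by
    simpa using hmax x
  have htangent := hf₁.inner_sub_le_of_hasGradientAt (mem_univ x) (mem_univ x') hg
  linarith

end Gradient

/-- Let `f₁ : ℝ^D → ℝ` be convex and differentiable,
`f₂ : ℝ^D → ℝ` arbitrary, `f = f₁ + f₂`, and let
`f̂(y, z) = f₁(z) + ⟨∇f₁(z), y − z⟩ + f₂(y)` be the CCCP surrogate.  If a
sequence `(y k)` satisfies `y (k+1) ∈ argmax_y f̂(y, y k)` for every `k`, then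
`f (y k)` is nondecreasing in `k`; and if moreover `f` is bounded above along
any sequence (e.g. `f ≤ 0`), the sequence of values `f (y k)` converges. -/
theorem cccp_iterates_monotone_and_converge {D : ℕ}
    (f₁ f₂ : EuclideanSpace ℝ (Fin D) → ℝ)
    (hconv : ConvexOn ℝ Set.univ f₁)
    (hdiff : Differentiable ℝ f₁)
    (y : ℕ → EuclideanSpace ℝ (Fin D))
    (hargmax : ∀ k, ∀ z : EuclideanSpace ℝ (Fin D),
      f₁ (y k) + ⟪gradient f₁ (y k), z - y k⟫ + f₂ z ≤
        f₁ (y k) + ⟪gradient f₁ (y k), y (k + 1) - y k⟫ + f₂ (y (k + 1))) :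
    (∀ k, f₁ (y k) + f₂ (y k) ≤ f₁ (y (k + 1)) + f₂ (y (k + 1))) ∧
    ((∃ C, ∀ k, f₁ (y k) + f₂ (y k) ≤ C) →
      ∃ L, Filter.Tendsto (fun k => f₁ (y k) + f₂ (y k))
        Filter.atTop (nhds L)) := by
  have hstep : ∀ k, f₁ (y k) + f₂ (y k) ≤ f₁ (y (k + 1)) + f₂ (y (k + 1)) := fun k =>
    hconv.add_le_add_of_isMax_linearization (hdiff (y k)).hasGradientAt (hargmax k)
  refine ⟨hstep, fun ⟨C, hC⟩ => ⟨_, tendsto_atTop_ciSup (monotone_nat_of_le_succ hstep) ?_⟩⟩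
  exact ⟨C, forall_mem_range.2 hC⟩
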